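/- Let A be a square matrix over ℚ indexed by a finite type V, and for each v ∈ V let c^v = [c^v₁, …, c^v_{k_v}] (k_v ≥ 1) be a list of rationals such that q_v := |c^v₂, …, c^v_{k_v}| ≠ 0, and set p_v := |c^v₁, …, c^v_{k_v}|. Let G be the 'hairy' matrix indexed by V ⊕ (Σ v ∈ V, Fin(k_v − 1)) obtained by grafting each chain c^v onto its vertex v: G agrees with A on the V×V block except that G(v,v) = A(v,v) + c^v₁ for each v; for each v the added vertices carry diagonal entries c^v₂, …, c^v_{k_v}, with entries −1 (in both symmetric positions) between v and the vertex carrying c^v₂ and between consecutive added vertices of the same chain; and all other entries are 0. Let A′ be the matrix indexed by V that agrees with A off the diagonal and has diagonal entries A′(v,v) = A(v,v) + p_v/q_v. Then det G = (∏_{v ∈ V} q_v) · det A′. -/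

import Mathlib

/-- The symmetric tridiagonal matrix with diagonal entries given by the list `L`
and `-1` immediately above and below the diagonal. -/
def triMat (L : List ℚ) : Matrix (Fin L.length) (Fin L.length) ℚ :=
  Matrix.of fun i j =>
    if (i : ℕ) = (j : ℕ) then L.get i
    else if (i : ℕ) + 1 = (j : ℕ) ∨ (j : ℕ) + 1 = (i : ℕ) then -1 else 0

/-- The tridiagonal determinant `|n₁, …, n_k|`; the determinant of the empty list is `1`. -/
def tridet (L : List ℚ) : ℚ := (triMat L).det

/-- The "hairy" matrix obtained from `A` by grafting, onto each vertex `v`, the chain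
with first entry `c₁ v` and remaining entries `rest v`: the diagonal entry at `v`
becomes `A v v + c₁ v`, each added vertex of the chain at `v` carries the corresponding
diagonal entry from `rest v`, the vertex `v` is joined by `-1` to the first added
vertex of its chain, and consecutive added vertices of the same chain are joined
by `-1`; all other new entries vanish. -/
def hairyMat {V : Type*} [DecidableEq V] (A : Matrix V V ℚ) (c₁ : V → ℚ)
    (rest : V → List ℚ) :
    Matrix (V ⊕ Σ v : V, Fin (rest v).length) (V ⊕ Σ v : V, Fin (rest v).length) ℚ :=
  Matrix.of fun x y =>
    match x, y with
    | .inl w, .inl w' => if w = w' then A w w + c₁ w else A w w'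
    | .inl w, .inr ⟨u, j⟩ => if w = u ∧ (j : ℕ) = 0 then -1 else 0
    | .inr ⟨u, i⟩, .inl w => if w = u ∧ (i : ℕ) = 0 then -1 else 0
    | .inr ⟨u, i⟩, .inr ⟨u', j⟩ =>
        if u = u' ∧ (i : ℕ) = (j : ℕ) then (rest u).get i
        else if u = u' ∧ ((i : ℕ) + 1 = (j : ℕ) ∨ (j : ℕ) + 1 = (i : ℕ)) then -1 else 0


/-! In block form `G = [[A + diag c₁, B], [Bᵀ, D]]` with `D` block diagonal with blocks
`T(rest v)`, the Schur complement gives `det G = det D · det (A + diag c₁ - B D⁻¹ Bᵀ)`.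
Each vertex is linked only to the first vertex of its own chain, so `B D⁻¹ Bᵀ` is diagonal
with entries `(T(rest v)⁻¹)₀₀`. The same identity for a single chain, read as the hairy graph
on one vertex, says `|c, rest| = |rest| · (c - (T(rest)⁻¹)₀₀)`, so the corrected diagonal
entries are exactly `A v v + p_v / q_v`. -/

open Matrix

theorem Matrix.det_blockDiagonal' {V R : Type*} [Fintype V] [DecidableEq V] [CommRing R]
    {m : V → Type*} [∀ v, Fintype (m v)] [∀ v, DecidableEq (m v)]
    (M : ∀ v, Matrix (m v) (m v) R) :
    (blockDiagonal' M).det = ∏ v, (M v).det := by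
  let _ : LinearOrder V := LinearOrder.lift' _ (Fintype.equivFin V).injective
  rw [(blockTriangular_blockDiagonal' M).det_fintype]
  refine Finset.prod_congr rfl fun v _ => ?_
  rw [← det_reindex_self (Equiv.sigmaSubtype v)]
  congr 1
  ext i j
  exact blockDiagonal'_apply_eq M v i j

theorem Matrix.inv_blockDiagonal' {V R : Type*} [Fintype V] [DecidableEq V] [CommRing R]
    {m : V → Type*} [∀ v, Fintype (m v)] [∀ v, DecidableEq (m v)]
    (M : ∀ v, Matrix (m v) (m v) R) (hM : ∀ v, IsUnit (M v).det) :
    (blockDiagonal' M)⁻¹ = blockDiagonal' fun v => (M v)⁻¹ := by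
  refine inv_eq_right_inv ?_
  rw [← blockDiagonal'_mul, ← blockDiagonal'_one]
  exact congrArg _ (funext fun v => mul_nonsing_inv _ (hM v))

theorem Matrix.of_ite_eq_add_diagonal {V α : Type*} [DecidableEq V] [AddZeroClass α]
    (A : Matrix V V α) (d : V → α) :
    (Matrix.of fun w w' => if w = w' then A w w + d w else A w w') = A + diagonal d := by
  ext w w'
  by_cases h : w = w' <;> simp [h]

def firstBasisVec (n : ℕ) : Fin n → ℚ := fun i => if (i : ℕ) = 0 then 1 else 0

/-- The `(0, 0)` entry of `(triMat L)⁻¹`, and `0` for the empty list. -/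
noncomputable def triInvHead (L : List ℚ) : ℚ :=
  firstBasisVec L.length ⬝ᵥ ((triMat L)⁻¹ *ᵥ firstBasisVec L.length)

/-- The `V × chains` block of `hairyMat`: `w` is joined by `-1` to the first vertex of its chain. -/
def hairLink {V : Type*} [DecidableEq V] (k : V → ℕ) : Matrix V (Σ v, Fin (k v)) ℚ :=
  Matrix.of fun w x => if w = x.1 then -firstBasisVec (k x.1) x.2 else 0

section hairLink

variable {V : Type*} [Fintype V] [DecidableEq V] (k : V → ℕ)

theorem hairLink_mul_apply {α : Type*} (M : Matrix (Σ v, Fin (k v)) α ℚ) (w : V) (a : α) :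
    (hairLink k * M) w a = -(firstBasisVec (k w) ⬝ᵥ fun i => M ⟨w, i⟩ a) := by
  simp [hairLink, mul_apply, Fintype.sum_sigma, ite_mul, Finset.sum_ite_irrel, dotProduct]

theorem mul_hairLink_transpose_apply {α : Type*} (M : Matrix α (Σ v, Fin (k v)) ℚ)
    (a : α) (w : V) :
    (M * (hairLink k)ᵀ) a w = -((fun i => M a ⟨w, i⟩) ⬝ᵥ firstBasisVec (k w)) := by
  simp [hairLink, mul_apply, Fintype.sum_sigma, mul_ite, Finset.sum_ite_irrel, dotProduct]

theorem hairLink_mul_blockDiagonal'_mul_transpose (N : ∀ v, Matrix (Fin (k v)) (Fin (k v)) ℚ) :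
    hairLink k * blockDiagonal' N * (hairLink k)ᵀ
      = diagonal fun v => firstBasisVec (k v) ⬝ᵥ (N v *ᵥ firstBasisVec (k v)) := by
  ext w w'
  rw [Matrix.mul_assoc, hairLink_mul_apply]
  simp_rw [mul_hairLink_transpose_apply]
  by_cases h : w = w'
  · subst h
    simp [blockDiagonal'_apply_eq, mulVec, dotProduct]
  · simp [blockDiagonal'_apply_ne N _ _ h, h]

end hairLink

theorem hairyMat_eq_fromBlocks {V : Type*} [DecidableEq V] (A : Matrix V V ℚ) (c₁ : V → ℚ)
    (rest : V → List ℚ) :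
    hairyMat A c₁ rest
      = fromBlocks (A + diagonal c₁) (hairLink fun v => (rest v).length)
          (hairLink fun v => (rest v).length)ᵀ (blockDiagonal' fun v => triMat (rest v)) := by
  ext (w | ⟨u, i⟩) (w' | ⟨u', j⟩)
  · by_cases h : w = w' <;> simp [hairyMat, h]
  · by_cases h : w = u' <;> simp [hairyMat, hairLink, firstBasisVec, neg_ite, h]
  · by_cases h : w' = u <;> simp [hairyMat, hairLink, firstBasisVec, neg_ite, h]
  · by_cases h : u = u'
    · subst h
      simp [hairyMat, triMat, blockDiagonal'_apply_eq]
    · simp [hairyMat, blockDiagonal'_apply_ne _ _ _ h, h]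

theorem det_hairyMat {V : Type*} [Fintype V] [DecidableEq V] (A : Matrix V V ℚ) (c₁ : V → ℚ)
    (rest : V → List ℚ) (hq : ∀ v, tridet (rest v) ≠ 0) :
    (hairyMat A c₁ rest).det
      = (∏ v, tridet (rest v)) * (A + diagonal fun v => c₁ v - triInvHead (rest v)).det := by
  have hunit : ∀ v, IsUnit (triMat (rest v)).det := fun v => (hq v).isUnit
  have hdet : (blockDiagonal' fun v => triMat (rest v)).det = ∏ v, tridet (rest v) :=
    det_blockDiagonal' _
  let _ := invertibleOfIsUnitDet _ (hdet ▸ (Finset.prod_ne_zero_iff.2 fun v _ => hq v).isUnit)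
  rw [hairyMat_eq_fromBlocks, det_fromBlocks₂₂, hdet, invOf_eq_nonsing_inv,
    inv_blockDiagonal' _ hunit, hairLink_mul_blockDiagonal'_mul_transpose, add_sub_assoc,
    diagonal_sub]
  rfl

def finSuccEquivUnitSumSigma (n : ℕ) : Fin (n + 1) ≃ Unit ⊕ Σ _ : Unit, Fin n :=
  (finSuccEquiv n).trans <| (Equiv.optionEquivSumPUnit _).trans <| (Equiv.sumComm _ _).trans <|
    Equiv.sumCongr (Equiv.refl _) (Equiv.uniqueSigma fun _ => Fin n).symm

theorem triMat_cons_eq_submatrix_hairyMat (c : ℚ) (L : List ℚ) :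
    triMat (c :: L) = (hairyMat (0 : Matrix Unit Unit ℚ) (fun _ => c) (fun _ => L)).submatrix
      (finSuccEquivUnitSumSigma L.length) (finSuccEquivUnitSumSigma L.length) := by
  ext i j
  cases i using Fin.cases <;> cases j using Fin.cases <;>
    simp [triMat, hairyMat, finSuccEquivUnitSumSigma, Fin.val_succ]

theorem tridet_cons (c : ℚ) (L : List ℚ) (hL : tridet L ≠ 0) :
    tridet (c :: L) = tridet L * (c - triInvHead L) := by
  rw [tridet, triMat_cons_eq_submatrix_hairyMat, det_submatrix_equiv_self,
    det_hairyMat _ _ _ fun _ => hL]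
  simp

/-- First formula of the hairy-graph determinant theorem:
`det G = (∏ v, q_v) · det A′` where `A′` has the diagonal marks `A v v + p_v / q_v`. -/
theorem det_hairy {V : Type*} [Fintype V] [DecidableEq V]
    (A : Matrix V V ℚ) (c₁ : V → ℚ) (rest : V → List ℚ)
    (hq : ∀ v, tridet (rest v) ≠ 0) :
    (hairyMat A c₁ rest).det
      = (∏ v, tridet (rest v)) *
        (Matrix.of fun w w' : V =>
          if w = w' then A w w + tridet (c₁ w :: rest w) / tridet (rest w)
          else A w w').det := by
  have hmark : ∀ v, c₁ v - triInvHead (rest v) = tridet (c₁ v :: rest v) / tridet (rest v) :=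
    fun v => by rw [tridet_cons _ _ (hq v), mul_div_cancel_left₀ _ (hq v)]
  rw [det_hairyMat A c₁ rest hq, of_ite_eq_add_diagonal]
  simp only [hmark]
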